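/- arXiv:math/0512126 — 3 statements merged into one kernel-verified Lean document; each statement's English description precedes it below -/
import Mathlib

section
/- Let a and b be two distinct points of the boundary circle S¹. Then the space ℰ of all continuous injective maps E : [0,1] → ℝ² whose image lies in the closed unit disc, with E(0) = a, E(1) = b, and E(s) in the open unit disc D for all s ∈ (0,1), topologized with the compact-open topology, is a contractible topological space. -/
/-!
An arc `E` is contracted onto the chord `[a, b]`: at time `t` one follows the chord from `a` to
`(1 - t) • a + t • b`, and then the image of `E` under the homothety of ratio `1 - t` centred at
`b`. That image lies in the closed ball of radius `1 - t` about `t • b`, which by strict convexity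
of the norm the earlier part of the chord avoids, so every intermediate path is again an embedded
arc. This works in any strictly convex real normed space.
-/

/-- The open unit disc in `ℝ² = ℂ`. -/
def Disc : Set ℂ := {z : ℂ | ‖z‖ < 1}

open Set Function AffineMap unitInterval Topology Filter

variable {V : Type*} [NormedAddCommGroup V] [NormedSpace ℝ V]

theorem norm_lineMap_le (x y : V) {t : ℝ} (h₀ : 0 ≤ t) (h₁ : t ≤ 1) :
    ‖lineMap x y t‖ ≤ (1 - t) * ‖x‖ + t * ‖y‖ := by
  rw [lineMap_apply_module]
  refine (norm_add_le _ _).trans_eq ?_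
  rw [norm_smul, norm_smul, Real.norm_of_nonneg (sub_nonneg.2 h₁), Real.norm_of_nonneg h₀]

theorem norm_lineMap_lt_one [StrictConvexSpace ℝ V] {a b : V} (ha : ‖a‖ ≤ 1) (hb : ‖b‖ ≤ 1)
    (hab : a ≠ b) {s : ℝ} (h₀ : 0 < s) (h₁ : s < 1) : ‖lineMap a b s‖ < 1 := by
  rw [lineMap_apply_module]
  exact norm_combo_lt_of_ne ha hb hab (sub_pos.2 h₁) h₀ (sub_add_cancel 1 s)

theorem lt_norm_lineMap_sub_smul [StrictConvexSpace ℝ V] {a b : V} (ha : ‖a‖ = 1)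
    (hb : ‖b‖ ≤ 1) (hab : a ≠ b) {s t : ℝ} (hst : s < t) (ht : t < 1) :
    1 - t < ‖lineMap a b s - t • b‖ := by
  -- Otherwise `a` is a proper convex combination of `b` and a point `x` of the closed unit ball.
  by_contra! h
  set x := (1 - t)⁻¹ • (lineMap a b s - t • b)
  have hx : ‖x‖ ≤ 1 := by
    rw [norm_smul, norm_inv, Real.norm_of_nonneg (by linarith)]
    exact inv_mul_le_one_of_le₀ h (by linarith)
  have hs : 0 < 1 - s := by linarith
  have hax : a = ((1 - t) / (1 - s)) • x + ((t - s) / (1 - s)) • b := by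
    have : 1 - t ≠ 0 := by linarith
    simp only [x, lineMap_apply_module, smul_smul, smul_sub, smul_add]
    field_simp
    module
  have hw : (1 - t) / (1 - s) + (t - s) / (1 - s) = 1 := by field_simp; ring
  rcases eq_or_ne x b with hxb | hxb
  · exact hab (by rw [hax, hxb, ← add_smul, hw, one_smul])
  · have := norm_combo_lt_of_ne hx hb hxb (div_pos (by linarith) hs) (div_pos (by linarith) hs) hw
    rw [← hax, ha] at this
    exact this.false

namespace unitInterval

/-- The affine reparametrisation of `[t, 1]` onto `[0, 1]`, clamped to `0` on `[0, t]`
(and constantly `0` when `t = 1`, where Lean's division by zero gives `0`). -/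
noncomputable def rescaleFrom (t s : I) : I :=
  projIcc 0 1 zero_le_one ((s - t) / (1 - t))

variable {t s : I}

theorem rescaleFrom_of_le (h : s ≤ t) : rescaleFrom t s = 0 := by
  refine projIcc_of_le_left _ (div_nonpos_of_nonpos_of_nonneg ?_ ?_)
  · exact sub_nonpos.2 h
  · exact sub_nonneg.2 t.2.2

theorem coe_rescaleFrom (h : t ≤ s) (ht : (t : ℝ) < 1) :
    (rescaleFrom t s : ℝ) = (s - t) / (1 - t) := by
  refine congrArg Subtype.val (projIcc_of_mem _ ⟨?_, ?_⟩)
  · exact div_nonneg (sub_nonneg.2 h) (sub_nonneg.2 ht.le)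
  · rw [div_le_one (sub_pos.2 ht)]
    linarith [s.2.2]

@[simp]
theorem rescaleFrom_zero (s : I) : rescaleFrom 0 s = s := by
  simp [rescaleFrom]

theorem rescaleFrom_one (ht : (t : ℝ) < 1) : rescaleFrom t 1 = 1 :=
  Subtype.ext <| (coe_rescaleFrom t.2.2 ht).trans (div_self (sub_pos.2 ht).ne')

theorem rescaleFrom_mem_Ioo (h₀ : t < s) (h₁ : (s : ℝ) < 1) :
    (rescaleFrom t s : ℝ) ∈ Ioo 0 1 := by
  have ht : 0 < 1 - (t : ℝ) := by linarith [show (t : ℝ) < s from h₀]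
  rw [coe_rescaleFrom h₀.le (by linarith), mem_Ioo, div_lt_one ht]
  exact ⟨div_pos (sub_pos.2 h₀) ht, by linarith⟩

theorem rescaleFrom_injOn (ht : (t : ℝ) < 1) : InjOn (rescaleFrom t) (Ici t) := by
  intro s hs u hu h
  have := congrArg Subtype.val h
  rw [coe_rescaleFrom hs ht, coe_rescaleFrom hu ht, div_left_inj' (sub_pos.2 ht).ne',
    sub_left_inj] at this
  exact Subtype.ext this

theorem continuousAt_rescaleFrom {p : I × I} (hp : (p.1 : ℝ) < 1) :
    ContinuousAt (fun q : I × I ↦ rescaleFrom q.1 q.2) p := by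
  refine continuous_projIcc.continuousAt.comp (ContinuousAt.div (by fun_prop) (by fun_prop) ?_)
  exact (sub_pos.2 hp).ne'

end unitInterval

theorem continuous_smul_of_norm_le {X : Type*} [TopologicalSpace X] {f : X → ℝ} {g : X → V}
    {M : X → ℝ} (hf : Continuous f) (hM : Continuous M) (hgM : ∀ x, ‖g x‖ ≤ M x)
    (hg : ∀ x, f x ≠ 0 → ContinuousAt g x) : Continuous fun x ↦ f x • g x := by
  refine continuous_iff_continuousAt.2 fun x ↦ ?_
  by_cases hx : f x = 0
  · have hf₀ : Tendsto f (𝓝 x) (𝓝 0) := hx ▸ hf.tendsto x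
    have hgb : IsBoundedUnder (· ≤ ·) (𝓝 x) (norm ∘ g) :=
      (hM.tendsto x).isBoundedUnder_le.mono_le (Eventually.of_forall hgM)
    simpa only [ContinuousAt, hx, zero_smul] using hf₀.zero_smul_isBoundedUnder_le hgb
  · exact hf.continuousAt.smul (hg x hx)

structure IsEmbeddedArc (a b : V) (γ : I → V) : Prop where
  injective : Injective γ
  norm_le_one : ∀ s, ‖γ s‖ ≤ 1
  map_zero : γ 0 = a
  map_one : γ 1 = b
  norm_lt_one : ∀ s : I, 0 < (s : ℝ) → (s : ℝ) < 1 → ‖γ s‖ < 1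

theorem isEmbeddedArc_lineMap {a b : V} [StrictConvexSpace ℝ V] (ha : ‖a‖ ≤ 1) (hb : ‖b‖ ≤ 1)
    (hab : a ≠ b) : IsEmbeddedArc a b fun s : I ↦ lineMap a b (s : ℝ) where
  injective := (lineMap_injective ℝ hab).comp Subtype.val_injective
  norm_le_one s := by
    refine (norm_lineMap_le a b s.2.1 s.2.2).trans ?_
    nlinarith [s.2.1, s.2.2]
  map_zero := lineMap_apply_zero a b
  map_one := lineMap_apply_one a b
  norm_lt_one _ h₀ h₁ := norm_lineMap_lt_one ha hb hab h₀ h₁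

noncomputable def shrinkToChord (a b : V) (t : I) (E : C(I, V)) (s : I) : V :=
  lineMap a b (min (s : ℝ) t) + (1 - (t : ℝ)) • (E (rescaleFrom t s) - a)

section shrinkToChord

variable {a b : V} {E : C(I, V)} {t s : I}

theorem shrinkToChord_of_le (hE : E 0 = a) (h : s ≤ t) :
    shrinkToChord a b t E s = lineMap a b (s : ℝ) := by
  rw [shrinkToChord, min_eq_left (Subtype.coe_le_coe.2 h), rescaleFrom_of_le h, hE, sub_self,
    smul_zero, add_zero]

theorem shrinkToChord_of_ge (h : t ≤ s) :
    shrinkToChord a b t E s = lineMap (E (rescaleFrom t s)) b (t : ℝ) := by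
  rw [shrinkToChord, min_eq_right (Subtype.coe_le_coe.2 h), lineMap_apply_module,
    lineMap_apply_module]
  module

theorem shrinkToChord_zero_left (a b : V) (E : C(I, V)) : shrinkToChord a b 0 E = E := by
  ext s
  rw [shrinkToChord, Icc.coe_zero, min_eq_right s.2.1, lineMap_apply_zero, rescaleFrom_zero,
    sub_zero, one_smul, add_sub_cancel]

theorem shrinkToChord_one_left (hE : E 0 = a) :
    shrinkToChord a b 1 E = fun s : I ↦ lineMap a b (s : ℝ) :=
  funext fun s ↦ shrinkToChord_of_le hE s.2.2

theorem continuous_shrinkToChord (a b : V) :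
    Continuous fun p : (I × C(I, V)) × I ↦ shrinkToChord a b p.1.1 p.1.2 p.2 := by
  -- `rescaleFrom` jumps at `t = 1`, but there the factor `1 - t` vanishes and `E` stays bounded.
  refine Continuous.add (by fun_prop) (continuous_smul_of_norm_le (M := fun p ↦ ‖p.1.2‖ + ‖a‖)
    (by fun_prop) (by fun_prop) (fun p ↦ ?_) fun p hp ↦ ?_)
  · exact (norm_sub_le _ _).trans (by gcongr; exact p.1.2.norm_coe_le_norm _)
  · have hσ : ContinuousAt (fun q : (I × C(I, V)) × I ↦ rescaleFrom q.1.1 q.2) p :=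
      (continuousAt_rescaleFrom (p := (p.1.1, p.2))
        (lt_of_le_of_ne p.1.1.2.2 (sub_ne_zero.1 hp).symm)).comp
        (f := fun q : (I × C(I, V)) × I ↦ (q.1.1, q.2)) (by fun_prop)
    have hE : Continuous fun q : (I × C(I, V)) × I ↦ q.1.2 := by fun_prop
    exact (continuous_eval.continuousAt.comp (hE.continuousAt.prodMk hσ)).sub continuousAt_const

end shrinkToChord

section StrictConvex

variable [StrictConvexSpace ℝ V] {a b : V} {E : C(I, V)}

theorem injective_shrinkToChord (hE : IsEmbeddedArc a b E) (ha : ‖a‖ = 1) (hb : ‖b‖ ≤ 1)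
    (hab : a ≠ b) (t : I) : Injective (shrinkToChord a b t E) := by
  suffices key : ∀ s u, s ≤ u → shrinkToChord a b t E s = shrinkToChord a b t E u → s = u from
    fun s u h ↦ (le_total s u).elim (key s u · h) fun hus ↦ (key u s hus h.symm).symm
  intro s u hsu h
  rcases le_or_gt u t with hut | htu
  · rw [shrinkToChord_of_le hE.map_zero (hsu.trans hut),
      shrinkToChord_of_le hE.map_zero hut] at h
    exact Subtype.val_injective (lineMap_injective ℝ hab h)
  have ht : (t : ℝ) < 1 := lt_of_lt_of_le htu u.2.2
  rw [shrinkToChord_of_ge htu.le] at h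
  rcases le_or_gt t s with hts | hst
  · rw [shrinkToChord_of_ge hts, lineMap_apply_module, lineMap_apply_module] at h
    have h' := smul_right_injective V (sub_pos.2 ht).ne' (add_right_cancel h)
    exact rescaleFrom_injOn ht hts htu.le (hE.injective h')
  -- The chord before time `t` avoids the closed ball of radius `1 - t` about `t • b`,
  -- which contains the shrunk copy of `E`.
  rw [shrinkToChord_of_le hE.map_zero hst.le] at h
  have hout := lt_norm_lineMap_sub_smul ha hb hab hst ht
  have hin : ‖lineMap (E (rescaleFrom t u)) b (t : ℝ) - (t : ℝ) • b‖ ≤ 1 - t := by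
    rw [lineMap_apply_module, add_sub_cancel_right, norm_smul,
      Real.norm_of_nonneg (sub_pos.2 ht).le]
    exact mul_le_of_le_one_right (sub_pos.2 ht).le (hE.norm_le_one _)
  exact absurd (h ▸ hout) hin.not_gt

theorem isEmbeddedArc_shrinkToChord (hE : IsEmbeddedArc a b E) (ha : ‖a‖ = 1) (hb : ‖b‖ ≤ 1)
    (hab : a ≠ b) (t : I) : IsEmbeddedArc a b (shrinkToChord a b t E) where
  injective := injective_shrinkToChord hE ha hb hab t
  norm_le_one s := by
    rcases le_total s t with hst | hts
    · rw [shrinkToChord_of_le hE.map_zero hst]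
      exact (isEmbeddedArc_lineMap ha.le hb hab).norm_le_one s
    · rw [shrinkToChord_of_ge hts]
      refine (norm_lineMap_le _ _ t.2.1 t.2.2).trans ?_
      nlinarith [hE.norm_le_one (rescaleFrom t s), t.2.1, t.2.2]
  map_zero := by
    rw [shrinkToChord_of_le hE.map_zero t.2.1, Icc.coe_zero, lineMap_apply_zero]
  map_one := by
    rcases t.2.2.eq_or_lt with ht | ht
    · rw [show t = 1 from Subtype.ext ht, shrinkToChord_one_left hE.map_zero]
      exact lineMap_apply_one a b
    · rw [shrinkToChord_of_ge t.2.2, rescaleFrom_one ht, hE.map_one, lineMap_same_apply]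
  norm_lt_one s h₀ h₁ := by
    rcases le_or_gt s t with hst | hts
    · rw [shrinkToChord_of_le hE.map_zero hst]
      exact (isEmbeddedArc_lineMap ha.le hb hab).norm_lt_one s h₀ h₁
    · have hσ := rescaleFrom_mem_Ioo hts h₁
      have ht : (t : ℝ) < 1 := lt_trans hts h₁
      rw [shrinkToChord_of_ge hts.le]
      refine (norm_lineMap_le _ _ t.2.1 t.2.2).trans_lt ?_
      nlinarith [hE.norm_lt_one _ hσ.1 hσ.2, t.2.1]

theorem contractibleSpace_isEmbeddedArc (ha : ‖a‖ = 1) (hb : ‖b‖ ≤ 1) (hab : a ≠ b) :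
    ContractibleSpace {E : C(I, V) // IsEmbeddedArc a b E} := by
  let chord : C(I, V) := ⟨fun s ↦ lineMap a b (s : ℝ), by fun_prop⟩
  rw [contractible_iff_id_nullhomotopic]
  refine ⟨⟨chord, isEmbeddedArc_lineMap ha.le hb hab⟩, ⟨?_⟩⟩
  have hH : Continuous fun p : (I × {E : C(I, V) // IsEmbeddedArc a b E}) × I ↦
      shrinkToChord a b p.1.1 p.1.2 p.2 :=
    (continuous_shrinkToChord a b).comp
      (f := fun p : (I × {E : C(I, V) // IsEmbeddedArc a b E}) × I ↦ ((p.1.1, p.1.2.1), p.2))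
      (by fun_prop)
  exact
  { toFun p := ⟨⟨shrinkToChord a b p.1 p.2, hH.comp (Continuous.prodMk_right p)⟩,
      isEmbeddedArc_shrinkToChord p.2.2 ha hb hab p.1⟩
    continuous_toFun := (ContinuousMap.continuous_of_continuous_uncurry _ hH).subtype_mk _
    map_zero_left E := Subtype.ext <| ContinuousMap.coe_injective <|
      shrinkToChord_zero_left a b E
    map_one_left E := Subtype.ext <| ContinuousMap.coe_injective <|
      shrinkToChord_one_left E.2.map_zero }

end StrictConvex

/-- Claim `ℰ_Δ is contractible` from Lemma 5.9: for two distinct boundary points `a`, `b` of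
the unit circle, the space of continuous injective maps `E : [0,1] → ℝ² = ℂ` with image in the
closed unit disc, `E 0 = a`, `E 1 = b`, and `E s` in the open unit disc for `0 < s < 1`,
with the compact-open topology (as a subspace of `C([0,1], ℂ)`), is contractible. -/
theorem contractible_space_of_embedded_arcs (a b : ℂ)
    (ha : ‖a‖ = 1) (hb : ‖b‖ = 1) (hab : a ≠ b) :
    ContractibleSpace {E : C(unitInterval, ℂ) // Function.Injective ⇑E ∧
      (∀ s, ‖E s‖ ≤ 1) ∧ E 0 = a ∧ E 1 = b ∧
      ∀ s : unitInterval, 0 < (s : ℝ) → (s : ℝ) < 1 → E s ∈ Disc} := by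
  have := contractibleSpace_isEmbeddedArc ha hb.le hab
  refine Homeomorph.contractibleSpace
    ((Homeomorph.refl C(I, ℂ)).subtype (q := fun E : C(I, ℂ) ↦ IsEmbeddedArc a b E) fun E ↦ ?_)
  exact ⟨fun ⟨h₁, h₂, h₃, h₄, h₅⟩ ↦ ⟨h₁, h₂, h₃, h₄, h₅⟩,
    fun ⟨h₁, h₂, h₃, h₄, h₅⟩ ↦ ⟨h₁, h₂, h₃, h₄, h₅⟩⟩
end

section
/- Fix t > 0 and let A_t = {x ∈ ℝ² : ‖x‖ > t}. Define F_t : A_t → ℝ² by F_t(x) = (√(‖x‖² − t²)/‖x‖) · x. Then F_t is a homeomorphism from A_t onto ℝ² \ {0}, and it preserves Lebesgue measure: for every measurable set S ⊆ ℝ², the Lebesgue measure of F_t⁻¹(S) ∩ A_t equals the Lebesgue measure of S ∩ (ℝ² \ {0}) (equivalently, the pushforward under F_t of Lebesgue measure restricted to A_t is Lebesgue measure restricted to ℝ² \ {0}). -/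
open MeasureTheory

/-!
`F_t` is the radial map `x ↦ φ(‖x‖²) x` with `φ(s) = √(s - t²) / √s`; it sends the circle of
radius `r > t` onto the circle of radius `√(r² - t²)`, so `y ↦ (√(‖y‖² + t²) / ‖y‖) y` inverts it.
In the plane, the Jacobian of `x ↦ φ(‖x‖²) x` is `φ (φ + 2 s φ') = (s φ²)'` at `s = ‖x‖²`, and
here `s φ(s)² = s - t²`, so `F_t` has Jacobian `1` and the change of variables formula shows
that it carries Lebesgue measure on `A_t` to Lebesgue measure on `ℝ² \ {0}`.
-/

/-- The exterior `A_t = {x : ‖x‖ > t}` of the circle of radius `t` in `ℝ² = ℂ`. -/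
def At (t : ℝ) : Set ℂ := {x : ℂ | t < ‖x‖}

/-- The radial map `F_t`, given in polar coordinates by `(r, θ) ↦ (√(r² − t²), θ)`. -/
noncomputable def Ft (t : ℝ) (x : ℂ) : ℂ :=
  (Real.sqrt (‖x‖ ^ 2 - t ^ 2) / ‖x‖) • x

section RadialMaps

variable {E : Type*}

theorem norm_div_norm_smul [NormedAddCommGroup E] [NormedSpace ℝ E] {c : ℝ} (hc : 0 ≤ c)
    {x : E} (hx : x ≠ 0) : ‖(c / ‖x‖) • x‖ = c := by
  rw [norm_smul, Real.norm_of_nonneg (by positivity), div_mul_cancel₀ _ (norm_ne_zero_iff.2 hx)]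

theorem div_norm_smul_div_norm_smul [NormedAddCommGroup E] [NormedSpace ℝ E] {b : ℝ} (hb : 0 < b)
    (c : ℝ) {x : E} (hx : x ≠ 0) : (c / ‖(b / ‖x‖) • x‖) • (b / ‖x‖) • x = (c / ‖x‖) • x := by
  rw [norm_div_norm_smul hb.le hx, smul_smul, div_mul_div_cancel₀ hb.ne']

theorem norm_div_norm_smul_self [NormedAddCommGroup E] [NormedSpace ℝ E] (x : E) :
    (‖x‖ / ‖x‖) • x = x := by
  rcases eq_or_ne x 0 with rfl | hx
  · simp
  · rw [div_self (norm_ne_zero_iff.2 hx), one_smul]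

theorem continuousOn_div_norm_smul [NormedAddCommGroup E] [NormedSpace ℝ E] {ρ : ℝ → ℝ}
    (hρ : Continuous ρ) : ContinuousOn (fun x : E => (ρ ‖x‖ / ‖x‖) • x) {0}ᶜ :=
  ((hρ.comp continuous_norm).continuousOn.div continuous_norm.continuousOn
    fun _ hx => norm_ne_zero_iff.2 hx).smul continuousOn_id

theorem hasFDerivAt_norm_sq_smul [NormedAddCommGroup E] [InnerProductSpace ℝ E] {φ : ℝ → ℝ}
    {φ' : ℝ} {x : E} (hφ : HasDerivAt φ φ' (‖x‖ ^ 2)) :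
    HasFDerivAt (fun y => φ (‖y‖ ^ 2) • y)
      (φ (‖x‖ ^ 2) • ContinuousLinearMap.id ℝ E + (2 * φ') • (innerSL ℝ x).smulRight x) x := by
  convert (hφ.comp_hasFDerivAt x (hasFDerivAt_id x).norm_sq).smul (hasFDerivAt_id x) using 1
  · rfl
  · ext y
    simp [smul_smul, mul_left_comm, mul_comm]

end RadialMaps

theorem Complex.det_smul_id_add_smul_smulRight_innerSL (a b : ℝ) (x : ℂ) :
    (a • ContinuousLinearMap.id ℝ ℂ + b • (innerSL ℝ x).smulRight x).det =
      a * (a + b * ‖x‖ ^ 2) := by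
  rw [ContinuousLinearMap.det, ← LinearMap.det_toMatrix Complex.basisOneI, Matrix.det_fin_two,
    Complex.sq_norm, Complex.normSq_apply]
  simp only [ContinuousLinearMap.toLinearMap_add, ContinuousLinearMap.toLinearMap_smul,
    ContinuousLinearMap.coe_id, ContinuousLinearMap.coe_smulRight,
    ContinuousLinearMap.toLinearMap_innerSL_apply, Fin.isValue, LinearMap.toMatrix_apply,
    coe_basisOneI, Matrix.cons_val_zero, Matrix.cons_val_one, Matrix.cons_val_fin_one,
    LinearMap.add_apply, LinearMap.smul_apply, LinearMap.id_coe, id_eq, real_smul,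
    LinearMap.coe_smulRight, innerₛₗ_apply_apply, Complex.inner, map_add, Finsupp.coe_add,
    Pi.add_apply, coe_basisOneI_repr, conj_re, conj_im, ofReal_re, ofReal_im, mul_re, mul_im,
    I_re, I_im, one_re]
  ring

theorem Complex.det_fderiv_norm_sq_smul {φ : ℝ → ℝ} {φ' : ℝ} {x : ℂ}
    (hφ : HasDerivAt φ φ' (‖x‖ ^ 2)) :
    (fderiv ℝ (fun y : ℂ => φ (‖y‖ ^ 2) • y) x).det =
      φ (‖x‖ ^ 2) * (φ (‖x‖ ^ 2) + 2 * φ' * ‖x‖ ^ 2) := by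
  rw [(hasFDerivAt_norm_sq_smul hφ).fderiv, Complex.det_smul_id_add_smul_smulRight_innerSL]

theorem hasDerivAt_sqrt_sub_div_sqrt {c s : ℝ} (hs : 0 < s) (hcs : c < s) :
    HasDerivAt (fun s => √(s - c) / √s) (c / (2 * s * √s * √(s - c))) s := by
  have hsc : 0 < s - c := sub_pos.2 hcs
  refine ((((hasDerivAt_id s).sub_const c).sqrt hsc.ne').div (Real.hasDerivAt_sqrt hs.ne')
    (Real.sqrt_pos.2 hs).ne').congr_deriv ?_
  have hr : 0 < √s := Real.sqrt_pos.2 hs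
  have hq : 0 < √(s - c) := Real.sqrt_pos.2 hsc
  have hr2 : √s ^ 2 = s := Real.sq_sqrt hs.le
  have hq2 : √(s - c) ^ 2 = s - c := Real.sq_sqrt hsc.le
  simp only [id]
  field_simp
  rw [hr2, hq2]
  ring

theorem sqrt_sub_div_sqrt_mul_add {c s : ℝ} (hs : 0 < s) (hcs : c < s) :
    √(s - c) / √s * (√(s - c) / √s + 2 * (c / (2 * s * √s * √(s - c))) * s) = 1 := by
  have hsc : 0 < s - c := sub_pos.2 hcs
  have hr : 0 < √s := Real.sqrt_pos.2 hs
  have hq : 0 < √(s - c) := Real.sqrt_pos.2 hsc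
  have hr2 : √s ^ 2 = s := Real.sq_sqrt hs.le
  have hq2 : √(s - c) ^ 2 = s - c := Real.sq_sqrt hsc.le
  field_simp
  rw [hr2, hq2]
  ring

section Ft

variable {t : ℝ}

noncomputable def FtInv (t : ℝ) (y : ℂ) : ℂ :=
  (√(‖y‖ ^ 2 + t ^ 2) / ‖y‖) • y

theorem ne_zero_of_mem_At (ht : 0 ≤ t) {x : ℂ} (hx : x ∈ At t) : x ≠ 0 :=
  norm_pos_iff.1 (ht.trans_lt hx)

theorem sq_lt_sq_norm_of_mem_At (ht : 0 ≤ t) {x : ℂ} (hx : x ∈ At t) : t ^ 2 < ‖x‖ ^ 2 :=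
  pow_lt_pow_left₀ hx ht two_ne_zero

theorem norm_Ft (x : ℂ) : ‖Ft t x‖ = √(‖x‖ ^ 2 - t ^ 2) := by
  rcases eq_or_ne x 0 with rfl | hx
  · simp [Ft, Real.sqrt_eq_zero'.2 (neg_nonpos.2 (sq_nonneg t))]
  · exact norm_div_norm_smul (Real.sqrt_nonneg _) hx

theorem norm_FtInv {y : ℂ} (hy : y ≠ 0) : ‖FtInv t y‖ = √(‖y‖ ^ 2 + t ^ 2) :=
  norm_div_norm_smul (Real.sqrt_nonneg _) hy

theorem Ft_ne_zero (ht : 0 ≤ t) {x : ℂ} (hx : x ∈ At t) : Ft t x ≠ 0 := by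
  rw [← norm_pos_iff, norm_Ft, Real.sqrt_pos, sub_pos]
  exact sq_lt_sq_norm_of_mem_At ht hx

theorem FtInv_mem_At (ht : 0 ≤ t) {y : ℂ} (hy : y ≠ 0) : FtInv t y ∈ At t := by
  show t < ‖FtInv t y‖
  rw [norm_FtInv hy, Real.lt_sqrt ht]
  exact lt_add_of_pos_left _ (by positivity)

theorem FtInv_Ft (ht : 0 ≤ t) {x : ℂ} (hx : x ∈ At t) : FtInv t (Ft t x) = x := by
  have hsub : 0 < ‖x‖ ^ 2 - t ^ 2 := sub_pos.2 (sq_lt_sq_norm_of_mem_At ht hx)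
  rw [FtInv, Ft, div_norm_smul_div_norm_smul (Real.sqrt_pos.2 hsub) _ (ne_zero_of_mem_At ht hx),
    ← Ft, norm_Ft, Real.sq_sqrt hsub.le, sub_add_cancel, Real.sqrt_sq (norm_nonneg x),
    norm_div_norm_smul_self]

theorem Ft_FtInv {y : ℂ} (hy : y ≠ 0) : Ft t (FtInv t y) = y := by
  have hadd : 0 < ‖y‖ ^ 2 + t ^ 2 := by positivity
  rw [Ft, FtInv, div_norm_smul_div_norm_smul (Real.sqrt_pos.2 hadd) _ hy, ← FtInv,
    norm_FtInv hy, Real.sq_sqrt hadd.le, add_sub_cancel_right, Real.sqrt_sq (norm_nonneg y),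
    norm_div_norm_smul_self]

noncomputable def partialHomeomorphFt (ht : 0 ≤ t) : PartialHomeomorph ℂ ℂ where
  toFun := Ft t
  invFun := FtInv t
  source := At t
  target := {0}ᶜ
  map_source' _ hx := Ft_ne_zero ht hx
  map_target' _ hy := FtInv_mem_At ht hy
  left_inv' _ hx := FtInv_Ft ht hx
  right_inv' _ hy := Ft_FtInv hy
  continuousOn_toFun := (continuousOn_div_norm_smul (ρ := fun r => √(r ^ 2 - t ^ 2))
    (by fun_prop)).mono fun _ => ne_zero_of_mem_At ht
  continuousOn_invFun := continuousOn_div_norm_smul (ρ := fun r => √(r ^ 2 + t ^ 2))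
    (by fun_prop)

theorem Ft_eq_smul : Ft t = fun y => (√(‖y‖ ^ 2 - t ^ 2) / √(‖y‖ ^ 2)) • y := by
  funext y
  rw [Ft, Real.sqrt_sq (norm_nonneg y)]

theorem differentiableAt_Ft (ht : 0 ≤ t) {x : ℂ} (hx : x ∈ At t) :
    DifferentiableAt ℝ (Ft t) x := by
  rw [Ft_eq_smul]
  exact (hasFDerivAt_norm_sq_smul (hasDerivAt_sqrt_sub_div_sqrt
    (pow_pos (ht.trans_lt hx) 2) (sq_lt_sq_norm_of_mem_At ht hx))).differentiableAt

theorem det_fderiv_Ft (ht : 0 ≤ t) {x : ℂ} (hx : x ∈ At t) : (fderiv ℝ (Ft t) x).det = 1 := by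
  have hs : 0 < ‖x‖ ^ 2 := pow_pos (ht.trans_lt hx) 2
  have hts : t ^ 2 < ‖x‖ ^ 2 := sq_lt_sq_norm_of_mem_At ht hx
  rw [Ft_eq_smul, Complex.det_fderiv_norm_sq_smul (hasDerivAt_sqrt_sub_div_sqrt hs hts)]
  exact sqrt_sub_div_sqrt_mul_add hs hts

theorem map_Ft_volume_restrict_At (ht : 0 ≤ t) :
    (volume.restrict (At t)).map (Ft t) = volume.restrict {0}ᶜ := by
  have hA : MeasurableSet (At t) := (isOpen_lt continuous_const continuous_norm).measurableSet
  have h := map_withDensity_abs_det_fderiv_eq_addHaar volume hA.nullMeasurableSet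
    (fun x hx => (differentiableAt_Ft ht hx).hasFDerivAt.hasFDerivWithinAt)
    (partialHomeomorphFt ht).injOn
  have himg : Ft t '' At t = {0}ᶜ := (partialHomeomorphFt ht).image_source_eq_target
  rwa [himg, withDensity_congr_ae (g := 1)
    ((ae_restrict_mem hA).mono fun x hx => by simp [det_fderiv_Ft ht hx]), withDensity_one] at h

end Ft

/-- Key computation of Proposition 4.1: for `t > 0`, the map
`F_t x = (√(‖x‖² − t²)/‖x‖) · x` is a homeomorphism from `A_t = {‖x‖ > t}` onto
`ℝ² \ {0}`, and it preserves Lebesgue measure: for every measurable `S`,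
the measure of `F_t ⁻¹' S ∩ A_t` equals the measure of `S \ {0}`. -/
theorem Ft_homeomorph_and_measure_preserving (t : ℝ) (ht : 0 < t) :
    (∃ h : ↥(At t) ≃ₜ ↥({(0 : ℂ)}ᶜ : Set ℂ), ∀ x : ↥(At t), (h x : ℂ) = Ft t x) ∧
    (∀ S : Set ℂ, MeasurableSet S →
      volume (Ft t ⁻¹' S ∩ At t) = volume (S \ {0})) := by
  refine ⟨⟨(partialHomeomorphFt ht.le).toHomeomorphSourceTarget, fun _ => rfl⟩, fun S hS => ?_⟩
  have hFt : Measurable (Ft t) := by unfold Ft; fun_prop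
  rw [← Measure.restrict_apply (hFt hS), ← Measure.map_apply hFt hS,
    map_Ft_volume_restrict_At ht.le, Measure.restrict_apply hS, Set.sdiff_eq]
end

section
/- For θ ∈ ℝ let R_θ ∈ ℋ denote the rotation of the open unit disc D through angle θ about the origin. Then the loop ℓ : [0,1] → ℋ given by ℓ(t) = R_{2πt} (so ℓ(0) = ℓ(1) = id) is not freely null-homotopic in ℋ: there is no continuous map H : [0,1] × [0,1] → ℋ with H(t, 0) = ℓ(t) for all t, H(0, τ) = H(1, τ) for all τ, and H(·, 1) a constant map. -/
lemma rot_mem (θ : ℝ) (z : ℂ) (hz : z ∈ Disc) : Complex.exp (θ * Complex.I) * z ∈ Disc := by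
  simp only [Disc, Set.mem_setOf_eq] at hz ⊢
  rw [norm_mul, Complex.norm_exp_ofReal_mul_I, one_mul]
  exact hz

/-- The rotation of the open unit disc through angle `θ` about the origin, i.e. the
restriction to the disc of the linear rotation of `ℝ² = ℂ` through angle `θ`. -/
noncomputable def rotMap (θ : ℝ) : C(Disc, Disc) :=
  ⟨fun z => ⟨Complex.exp (θ * Complex.I) * z, rot_mem θ z z.2⟩,
    (continuous_const.mul continuous_subtype_val).subtype_mk _⟩

lemma rotMap_rotMap (θ : ℝ) (z : Disc) : rotMap (-θ) (rotMap θ z) = z := by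
  apply Subtype.ext
  show Complex.exp ((-θ : ℝ) * Complex.I) * (Complex.exp ((θ : ℝ) * Complex.I) * (z : ℂ))
      = (z : ℂ)
  rw [← mul_assoc, ← Complex.exp_add]
  push_cast
  ring_nf
  simp

lemma isHomeomorph_rotMap (θ : ℝ) : IsHomeomorph (rotMap θ) := by
  refine isHomeomorph_iff_exists_homeomorph.mpr ⟨Homeomorph.mk
    ⟨rotMap θ, rotMap (-θ), fun z => rotMap_rotMap θ z, fun z => ?_⟩
    (rotMap θ).continuous (rotMap (-θ)).continuous, rfl⟩
  have h := rotMap_rotMap (-θ) z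
  rwa [neg_neg] at h

section

open unitInterval

theorem IsCoveringMap.lift_one_eq_lift_zero_of_freelyNullhomotopic {E X : Type*}
    [TopologicalSpace E] [TopologicalSpace X] {p : E → X} (cov : IsCoveringMap p)
    (F : C(I × I, X)) (h_loop : ∀ τ, F (0, τ) = F (1, τ)) (h_const : ∀ t, F (t, 1) = F (0, 1))
    (Γ : C(I, E)) (hΓ : ∀ t, p (Γ t) = F (t, 0)) : Γ 1 = Γ 0 := by
  set L := cov.liftHomotopy (F.comp .prodSwap) Γ fun t ↦ (hΓ t).symm
  have hL : ∀ τ t, p (L (τ, t)) = F (t, τ) := fun τ t ↦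
    congr_fun (cov.liftHomotopy_lifts _ Γ _) (τ, t)
  have h_bottom : ∀ t, L (0, t) = Γ t := cov.liftHomotopy_zero _ Γ _
  have h_top : (fun t ↦ L (1, t)) = fun _ ↦ L (1, 0) :=
    cov.eq_of_comp_eq (by fun_prop) continuous_const
      (funext fun t ↦ by simp only [Function.comp_apply, hL, h_const]) 0 rfl
  have h_sides : (fun τ ↦ L (τ, 1)) = fun τ ↦ L (τ, 0) :=
    cov.eq_of_comp_eq (by fun_prop) (by fun_prop)
      (funext fun τ ↦ by simp only [Function.comp_apply, hL, h_loop]) 1 (congr_fun h_top 1)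
  simpa only [h_bottom] using congr_fun h_sides 0

end

open Complex

noncomputable def chordMap {Y : Type*} [TopologicalSpace Y] {S T : Set ℂ} (H : Y → C(S, T))
    (hH : Continuous H) (h_inj : ∀ y, Function.Injective (H y)) {z w : S} (hzw : z ≠ w) :
    C(Y, {c : ℂ // c ≠ 0}) where
  toFun y := ⟨((H y z : ℂ) - H y w) / (z - w),
    div_ne_zero (sub_ne_zero.2 <| Subtype.coe_injective.ne <| (h_inj y).ne hzw)
      (sub_ne_zero.2 <| Subtype.coe_injective.ne hzw)⟩
  continuous_toFun := by fun_prop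

/-- Proposition 4.7: the full-rotation loop `t ↦ R_{2πt}` in the space `ℋ` of homeomorphisms
of the open unit disc (a subspace of `C(D, D)` with the compact-open topology) is not freely
null-homotopic: there is no continuous `H : [0,1] × [0,1] → ℋ` restricting to the loop at
time `0`, matching up the two ends, and constant at time `1`. -/
theorem rotation_loop_not_nullhomotopic :
    ¬ ∃ H : C(unitInterval × unitInterval, {f : C(Disc, Disc) // IsHomeomorph ⇑f}),
      (∀ t : unitInterval, H (t, 0) =
        ⟨rotMap (2 * Real.pi * (t : ℝ)), isHomeomorph_rotMap _⟩) ∧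
      (∀ τ : unitInterval, H (0, τ) = H (1, τ)) ∧
      (∃ g, ∀ t : unitInterval, H (t, 1) = g) := by
  rintro ⟨H, h_bottom, h_sides, g, h_top⟩
  have h_half : (1 / 2 : ℂ) ∈ Disc := by norm_num [Disc]
  have h_zero : (0 : ℂ) ∈ Disc := by simp [Disc]
  have hzw : (⟨1 / 2, h_half⟩ : Disc) ≠ ⟨0, h_zero⟩ := by simp
  set F := chordMap (fun p ↦ (H p).1) (by fun_prop) (fun p ↦ (H p).2.injective) hzw
  have h_closed := isCoveringMap_exp.lift_one_eq_lift_zero_of_freelyNullhomotopic F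
    (fun τ ↦ by simp [F, chordMap, h_sides]) (fun t ↦ by simp [F, chordMap, h_top])
    ⟨fun t ↦ 2 * Real.pi * (t : ℝ) * I, by fun_prop⟩
    (fun t ↦ by ext; simp [F, chordMap, h_bottom, rotMap])
  simp [Real.pi_ne_zero] at h_closed
end
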